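/- arXiv:2405.20447 — 4 statements merged into one kernel-verified Lean document; each statement's English description precedes it below -/
import Mathlib

section
/- For random variables f(X'), Y' valued in {0,1} and a group attribute G, the pair (f(X'), Y') is independent of G if and only if all three of the following hold: f(X') is independent of G (demographic parity), f(X') is conditionally independent of G given Y' (separation), and Y' is conditionally independent of G given f(X') (sufficiency). -/
open MeasureTheory

lemma bool_split {Ω : Type*} [MeasurableSpace Ω] (μ : Measure Ω)
    (s : Set Ω) {B : Ω → Bool} (hB : Measurable B) :
    μ s = μ (s ∩ {ω | B ω = true}) + μ (s ∩ {ω | B ω = false}) := by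
  have ht : MeasurableSet {ω | B ω = true} := by
    have := hB (MeasurableSet.singleton true)
    simpa [Set.preimage, Set.mem_singleton_iff] using this
  have h := measure_inter_add_diff (μ := μ) s ht
  have hd : s \ {ω | B ω = true} = s ∩ {ω | B ω = false} := by
    ext ω; simp [Set.mem_diff]
  rw [← h, hd]

lemma ennreal_cancel {a b c : ENNReal} (h0 : a ≠ 0) (ht : a ≠ ⊤)
    (h : b * a = c * a) : b = c := by
  have := congrArg (· * a⁻¹) h
  simpa [mul_assoc, ENNReal.mul_inv_cancel h0 ht] using this

/-- For {0,1}-valued `F = f(X')`, `Y' = Y` and a finite group attribute `G`,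
the pair `(F, Y)` is independent of `G` iff demographic parity, separation and
sufficiency all hold (with positive group probabilities and nondegenerate
conditional probabilities). Independence and conditional independence are
expressed through the usual product/cross-multiplied identities. -/
theorem stmt_0
    {Ω : Type*} [MeasurableSpace Ω] (μ : Measure Ω) [IsProbabilityMeasure μ]
    {𝒢 : Type*} [MeasurableSpace 𝒢] [Fintype 𝒢] [MeasurableSingletonClass 𝒢]
    (F Y : Ω → Bool) (G : Ω → 𝒢)
    (hF : Measurable F) (hY : Measurable Y) (hG : Measurable G)
    (hGpos : ∀ g : 𝒢, 0 < μ {ω | G ω = g})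
    (hYnd : ∀ (y : Bool) (g : 𝒢), 0 < μ {ω | Y ω = y ∧ G ω = g} ∧
      μ {ω | Y ω = y ∧ G ω = g} < μ {ω | G ω = g})
    (hFnd : ∀ (yh : Bool) (g : 𝒢), 0 < μ {ω | F ω = yh ∧ G ω = g} ∧
      μ {ω | F ω = yh ∧ G ω = g} < μ {ω | G ω = g}) :
    (∀ (yh y : Bool) (g : 𝒢),
        μ {ω | F ω = yh ∧ Y ω = y ∧ G ω = g}
          = μ {ω | F ω = yh ∧ Y ω = y} * μ {ω | G ω = g})
    ↔
    ((∀ (yh : Bool) (g : 𝒢),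
        μ {ω | F ω = yh ∧ G ω = g} = μ {ω | F ω = yh} * μ {ω | G ω = g}) ∧
     (∀ (yh y : Bool) (g : 𝒢),
        μ {ω | F ω = yh ∧ Y ω = y ∧ G ω = g} * μ {ω | Y ω = y}
          = μ {ω | F ω = yh ∧ Y ω = y} * μ {ω | Y ω = y ∧ G ω = g}) ∧
     (∀ (y yh : Bool) (g : 𝒢),
        μ {ω | Y ω = y ∧ F ω = yh ∧ G ω = g} * μ {ω | F ω = yh}
          = μ {ω | Y ω = y ∧ F ω = yh} * μ {ω | F ω = yh ∧ G ω = g})) := by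
  -- helpful set identities
  have eFG : ∀ (yh y : Bool) (g : 𝒢),
      {ω | F ω = yh ∧ G ω = g} ∩ {ω | Y ω = y} = {ω | F ω = yh ∧ Y ω = y ∧ G ω = g} := by
    intro yh y g; ext ω; simp only [Set.mem_inter_iff, Set.mem_setOf_eq]; try tauto
  have eF : ∀ (yh y : Bool),
      {ω | F ω = yh} ∩ {ω | Y ω = y} = {ω | F ω = yh ∧ Y ω = y} := by
    intro yh y; ext ω; simp only [Set.mem_inter_iff, Set.mem_setOf_eq]; try tauto
  have eYG : ∀ (y yh : Bool) (g : 𝒢),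
      {ω | Y ω = y ∧ G ω = g} ∩ {ω | F ω = yh} = {ω | F ω = yh ∧ Y ω = y ∧ G ω = g} := by
    intro y yh g; ext ω; simp only [Set.mem_inter_iff, Set.mem_setOf_eq]; try tauto
  have eY : ∀ (y yh : Bool),
      {ω | Y ω = y} ∩ {ω | F ω = yh} = {ω | F ω = yh ∧ Y ω = y} := by
    intro y yh; ext ω; simp only [Set.mem_inter_iff, Set.mem_setOf_eq]; try tauto
  have eYFG : ∀ (y yh : Bool) (g : 𝒢),
      {ω | Y ω = y ∧ F ω = yh ∧ G ω = g} = {ω | F ω = yh ∧ Y ω = y ∧ G ω = g} := by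
    intro y yh g; ext ω; simp only [Set.mem_inter_iff, Set.mem_setOf_eq]; try tauto
  have eYF : ∀ (y yh : Bool),
      {ω | Y ω = y ∧ F ω = yh} = {ω | F ω = yh ∧ Y ω = y} := by
    intro y yh; ext ω; simp only [Set.mem_inter_iff, Set.mem_setOf_eq]; try tauto
  constructor
  · intro h
    -- demographic parity derived from joint independence
    have hDP : ∀ (yh : Bool) (g : 𝒢),
        μ {ω | F ω = yh ∧ G ω = g} = μ {ω | F ω = yh} * μ {ω | G ω = g} := by
      intro yh g
      have h1 := bool_split μ {ω | F ω = yh ∧ G ω = g} hY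
      have h2 := bool_split μ {ω | F ω = yh} hY
      rw [eFG yh true g, eFG yh false g] at h1
      rw [eF yh true, eF yh false] at h2
      rw [h1, h2, h yh true g, h yh false g, add_mul]
    -- Y ⊥ G derived from joint independence
    have hYG : ∀ (y : Bool) (g : 𝒢),
        μ {ω | Y ω = y ∧ G ω = g} = μ {ω | Y ω = y} * μ {ω | G ω = g} := by
      intro y g
      have h1 := bool_split μ {ω | Y ω = y ∧ G ω = g} hF
      have h2 := bool_split μ {ω | Y ω = y} hF
      rw [eYG y true g, eYG y false g] at h1
      rw [eY y true, eY y false] at h2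
      rw [h1, h2, h true y g, h false y g, add_mul]
    refine ⟨hDP, ?_, ?_⟩
    · intro yh y g
      rw [h yh y g, hYG y g]; ring
    · intro y yh g
      rw [eYFG y yh g, eYF y yh, h yh y g, hDP yh g]; ring
  · rintro ⟨hDP, _hSep, hSuf⟩
    intro yh y g
    have hSuf' := hSuf y yh g
    rw [eYFG y yh g, eYF y yh, hDP yh g] at hSuf'
    -- hSuf' : μ {F∧Y∧G} * μ {F} = μ {F∧Y} * (μ {F} * μ {G})
    have hFpos : μ {ω | F ω = yh} ≠ 0 := by
      have hle : μ {ω | F ω = yh ∧ G ω = g} ≤ μ {ω | F ω = yh} := by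
        apply measure_mono; intro ω hω; exact hω.1
      exact fun h0 => ((hFnd yh g).1.trans_le hle).ne' h0
    have hFfin : μ {ω | F ω = yh} ≠ ⊤ := measure_ne_top μ _
    have : μ {ω | F ω = yh ∧ Y ω = y ∧ G ω = g} * μ {ω | F ω = yh}
        = (μ {ω | F ω = yh ∧ Y ω = y} * μ {ω | G ω = g}) * μ {ω | F ω = yh} := by
      rw [hSuf']; ring
    exact ennreal_cancel hFpos hFfin this
end

section
/- If a classifier satisfies both demographic parity (f(X) ⊥ G) and separation (f(X) ⊥ G ∣ Y) with {0,1}-valued f(X) and Y, and all conditional probabilities are well-defined and ℙ(f(X)=1 ∣ Y=0) ≠ ℙ(f(X)=1 ∣ Y=1), then ℙ(Y = 1 ∣ G = g) is the same for all groups g. -/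
open MeasureTheory

/-- If a {0,1}-valued classifier `F` satisfies demographic parity and separation
with respect to a {0,1}-valued label `Y` and a group attribute `G` with positive
group probabilities, and the classifier is not independent of the label
(`ℙ(F=1∣Y=0) ≠ ℙ(F=1∣Y=1)`, written cross-multiplied), then the base rate
`ℙ(Y=1∣G=g)` is the same across groups (written cross-multiplied). -/
theorem stmt_1
    {Ω : Type*} [MeasurableSpace Ω] (μ : Measure Ω) [IsProbabilityMeasure μ]
    {𝒢 : Type*} [MeasurableSpace 𝒢] [MeasurableSingletonClass 𝒢]
    (F Y : Ω → Bool) (G : Ω → 𝒢)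
    (hF : Measurable F) (hY : Measurable Y) (hG : Measurable G)
    (hGpos : ∀ g : 𝒢, 0 < μ {ω | G ω = g})
    (hY0 : 0 < μ {ω | Y ω = false}) (hY1 : 0 < μ {ω | Y ω = true})
    (hDP : ∀ (yh : Bool) (g : 𝒢),
      μ {ω | F ω = yh ∧ G ω = g} = μ {ω | F ω = yh} * μ {ω | G ω = g})
    (hSep : ∀ (yh y : Bool) (g : 𝒢),
      μ {ω | F ω = yh ∧ Y ω = y ∧ G ω = g} * μ {ω | Y ω = y}
        = μ {ω | F ω = yh ∧ Y ω = y} * μ {ω | Y ω = y ∧ G ω = g})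
    (hne : μ {ω | F ω = true ∧ Y ω = false} * μ {ω | Y ω = true}
        ≠ μ {ω | F ω = true ∧ Y ω = true} * μ {ω | Y ω = false}) :
    ∀ g g' : 𝒢,
      μ {ω | Y ω = true ∧ G ω = g} * μ {ω | G ω = g'}
        = μ {ω | Y ω = true ∧ G ω = g'} * μ {ω | G ω = g} := by
  
  -- Splitting a set by the value of Y
  have mY : MeasurableSet {ω | Y ω = true} := hY (measurableSet_singleton true)
  have hsplit : ∀ (S : Set Ω), MeasurableSet S →
      μ S = μ ({ω | Y ω = true} ∩ S) + μ ({ω | Y ω = false} ∩ S) := by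
    intro S hS
    have h2 : {ω | Y ω = false} ∩ S = S \ {ω | Y ω = true} := by
      ext ω; simp [Bool.not_eq_true, and_comm]
    rw [h2, Set.inter_comm, measure_inter_add_diff S mY]
  have fin : ∀ s : Set Ω, μ s ≠ ⊤ := fun s => measure_ne_top μ s
  -- real abbreviations
  set p : ℝ := (μ {ω | Y ω = true}).toReal with hp
  set q : ℝ := (μ {ω | Y ω = false}).toReal with hq
  set A : ℝ := (μ {ω | F ω = true ∧ Y ω = true}).toReal with hA
  set B : ℝ := (μ {ω | F ω = true ∧ Y ω = false}).toReal with hB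
  set a : 𝒢 → ℝ := fun g => (μ {ω | Y ω = true ∧ G ω = g}).toReal with ha
  set b : 𝒢 → ℝ := fun g => (μ {ω | Y ω = false ∧ G ω = g}).toReal with hb
  have hp0 : 0 < p := ENNReal.toReal_pos (ne_of_gt hY1) (fin _)
  have hq0 : 0 < q := ENNReal.toReal_pos (ne_of_gt hY0) (fin _)
  -- split facts
  have split_c : ∀ g : 𝒢, ((μ {ω | G ω = g}).toReal : ℝ) = a g + b g := by
    intro g
    have h := hsplit {ω | G ω = g} (hG (measurableSet_singleton g))
    have e1 : {ω | Y ω = true} ∩ {ω | G ω = g} = {ω | Y ω = true ∧ G ω = g} := rfl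
    have e2 : {ω | Y ω = false} ∩ {ω | G ω = g} = {ω | Y ω = false ∧ G ω = g} := rfl
    rw [e1, e2] at h
    rw [h, ENNReal.toReal_add (fin _) (fin _)]
  have split_F : ((μ {ω | F ω = true}).toReal : ℝ) = A + B := by
    have h := hsplit {ω | F ω = true} (hF (measurableSet_singleton true))
    have e1 : {ω | Y ω = true} ∩ {ω | F ω = true} = {ω | F ω = true ∧ Y ω = true} := by
      ext ω; exact and_comm
    have e2 : {ω | Y ω = false} ∩ {ω | F ω = true} = {ω | F ω = true ∧ Y ω = false} := by
      ext ω; exact and_comm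
    rw [e1, e2] at h
    rw [h, ENNReal.toReal_add (fin _) (fin _)]
  have split_univ : p + q = 1 := by
    have h := hsplit Set.univ MeasurableSet.univ
    simp only [Set.inter_univ] at h
    rw [measure_univ] at h
    have := congrArg ENNReal.toReal h
    rw [ENNReal.toReal_add (fin _) (fin _)] at this
    simpa using this.symm
  have split_FG : ∀ g : 𝒢, ((μ {ω | F ω = true ∧ G ω = g}).toReal : ℝ)
      = (μ {ω | F ω = true ∧ Y ω = true ∧ G ω = g}).toReal
        + (μ {ω | F ω = true ∧ Y ω = false ∧ G ω = g}).toReal := by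
    intro g
    have h := hsplit {ω | F ω = true ∧ G ω = g}
      ((hF (measurableSet_singleton true)).inter (hG (measurableSet_singleton g)))
    have e1 : {ω | Y ω = true} ∩ {ω | F ω = true ∧ G ω = g}
        = {ω | F ω = true ∧ Y ω = true ∧ G ω = g} := by
      ext ω; simp only [Set.mem_inter_iff, Set.mem_setOf_eq]; tauto
    have e2 : {ω | Y ω = false} ∩ {ω | F ω = true ∧ G ω = g}
        = {ω | F ω = true ∧ Y ω = false ∧ G ω = g} := by
      ext ω; simp only [Set.mem_inter_iff, Set.mem_setOf_eq]; tauto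
    rw [e1, e2] at h
    rw [h, ENNReal.toReal_add (fin _) (fin _)]
  -- real versions of hypotheses
  have hSepR1 : ∀ g : 𝒢, (μ {ω | F ω = true ∧ Y ω = true ∧ G ω = g}).toReal * p = A * a g := by
    intro g
    have := congrArg ENNReal.toReal (hSep true true g)
    rwa [ENNReal.toReal_mul, ENNReal.toReal_mul] at this
  have hSepR0 : ∀ g : 𝒢, (μ {ω | F ω = true ∧ Y ω = false ∧ G ω = g}).toReal * q = B * b g := by
    intro g
    have := congrArg ENNReal.toReal (hSep true false g)
    rwa [ENNReal.toReal_mul, ENNReal.toReal_mul] at this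
  have hDPR : ∀ g : 𝒢, (μ {ω | F ω = true ∧ Y ω = true ∧ G ω = g}).toReal
      + (μ {ω | F ω = true ∧ Y ω = false ∧ G ω = g}).toReal = (A + B) * (a g + b g) := by
    intro g
    have := congrArg ENNReal.toReal (hDP true g)
    rw [ENNReal.toReal_mul] at this
    rw [← split_FG g, this, split_F, split_c]
  have hneR : B * p ≠ A * q := by
    intro h
    apply hne
    have h1 : (μ {ω | F ω = true ∧ Y ω = false} * μ {ω | Y ω = true}).toReal
        = (μ {ω | F ω = true ∧ Y ω = true} * μ {ω | Y ω = false}).toReal := by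
      rw [ENNReal.toReal_mul, ENNReal.toReal_mul]; exact h
    exact (ENNReal.toReal_eq_toReal_iff' (ENNReal.mul_ne_top (fin _) (fin _))
      (ENNReal.mul_ne_top (fin _) (fin _))).mp h1
  -- key: a g * q = b g * p
  have key : ∀ g : 𝒢, a g * q = b g * p := by
    intro g
    have h0 : (A * q - B * p) * (a g * q - b g * p) = 0 := by
      linear_combination (p * q) * hDPR g - q * hSepR1 g - p * hSepR0 g
        + (A * a g * q + B * b g * p) * split_univ
    rcases mul_eq_zero.mp h0 with h | h
    · exact absurd (by linarith : B * p = A * q) hneR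
    · linarith
  -- finish
  intro g g'
  have habs : a g * b g' = a g' * b g := by
    have hpne : p ≠ 0 := ne_of_gt hp0
    apply mul_left_cancel₀ hpne
    linear_combination (a g') * key g - (a g) * key g'
  apply (ENNReal.toReal_eq_toReal_iff' (ENNReal.mul_ne_top (fin _) (fin _))
    (ENNReal.mul_ne_top (fin _) (fin _))).mp
  rw [ENNReal.toReal_mul, ENNReal.toReal_mul, split_c g, split_c g']
  show a g * (a g' + b g') = a g' * (a g + b g)
  nlinarith [habs]
end

section
/- Let G_A, G_D: ℝ → [0,1] be CDFs with G_A(c) > G_D(c) for all c > 0 (cost distribution for group D stochastically strictly dominates that of A on positives). For any thresholds θ_A, θ_D, define π_g = G_g(w(TPR(θ_g) − FPR(θ_g))). If TPR(θ_A) = TPR(θ_D), FPR(θ_A) = FPR(θ_D), and π_A = π_D, then w(TPR(θ_A) − FPR(θ_A)) ≤ 0; in particular if additionally G_g(c) = 0 for c ≤ 0, then π_A = π_D = 0. -/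
/-- Coate–Loury impossibility: if `G_A(c) > G_D(c)` for all `c > 0` (cost CDFs),
wages `w > 0`, and the TPR/FPR of the two thresholds agree (no DIF) while the
equilibrium qualification rates `π_g = G_g(w(TPR − FPR))` are equal, then the
net incentive `w(TPR − FPR)` is nonpositive; if moreover costs are positive
(`G_g(c) = 0` for `c ≤ 0`), both qualification rates are zero. -/
theorem stmt_13 (GA GD : ℝ → ℝ) (w : ℝ) (hw : 0 < w)
    (TPR FPR : ℝ → ℝ) (θA θD : ℝ)
    (hmonoA : Monotone GA) (hmonoD : Monotone GD)
    (hrangeA : ∀ c, GA c ∈ Set.Icc (0 : ℝ) 1)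
    (hrangeD : ∀ c, GD c ∈ Set.Icc (0 : ℝ) 1)
    (hstrict : ∀ c : ℝ, 0 < c → GD c < GA c)
    (hTPR : TPR θA = TPR θD) (hFPR : FPR θA = FPR θD)
    (hπ : GA (w * (TPR θA - FPR θA)) = GD (w * (TPR θD - FPR θD))) :
    w * (TPR θA - FPR θA) ≤ 0 ∧
    ((∀ c : ℝ, c ≤ 0 → GA c = 0 ∧ GD c = 0) →
      GA (w * (TPR θA - FPR θA)) = 0 ∧ GD (w * (TPR θD - FPR θD)) = 0) := by
  have hed : w * (TPR θD - FPR θD) = w * (TPR θA - FPR θA) := by rw [hTPR, hFPR]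
  rw [hed] at hπ
  have hle : w * (TPR θA - FPR θA) ≤ 0 := by
    by_contra h
    push_neg at h
    exact absurd hπ (ne_of_gt (hstrict _ h))
  refine ⟨hle, fun h0 => ?_⟩
  rw [hed]
  exact ⟨(h0 _ hle).1, (h0 _ hle).2⟩
end

section
/- With the setup of the previous statement, if additionally the constraint Mμ(Q) ≤ c has a feasible point and (Q̂, λ̂) is an ε-approximate saddle point, then every coordinate of the constraint violation satisfies max_k (Mμ(Q̂) − c)_k ≤ (1 + 2ε)/B. -/
open Matrix

/-- Agarwal-style constraint-violation guarantee at an ε-approximate saddle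
point of `L(Q, λ) = EPR(Q) + λᵀ(Mμ(Q) − c)` over the simplex `Δ(ℱ)` and the
nonnegative `ℓ₁`-ball of radius `B > 0`, with `EPR` valued in `[0,1]` on the
simplex and the constraint `Mμ(Q) ≤ c` feasible: every coordinate of the
constraint violation of `Q̂` is at most `(1 + 2ε)/B`. -/
theorem stmt_19 {F : Type*} [Fintype F] {K : ℕ}
    (epr : F → ℝ) (muf : F → Fin K → ℝ)
    (M : Matrix (Fin K) (Fin K) ℝ) (c : Fin K → ℝ) (B ε : ℝ)
    (hB : 0 < B) (hε : 0 ≤ ε)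
    (EPR : (F → ℝ) → ℝ) (hEPR : ∀ Q, EPR Q = ∑ f : F, Q f * epr f)
    (hEPR01 : ∀ Q : F → ℝ, (∀ f, 0 ≤ Q f) → (∑ f : F, Q f = 1) →
      EPR Q ∈ Set.Icc (0 : ℝ) 1)
    (μv : (F → ℝ) → Fin K → ℝ)
    (hμv : ∀ Q k, μv Q k = ∑ f : F, Q f * muf f k)
    (L : (F → ℝ) → (Fin K → ℝ) → ℝ)
    (hL : ∀ Q lam, L Q lam = EPR Q + lam ⬝ᵥ (M.mulVec (μv Q) - c))
    (hfeas : ∃ Qstar : F → ℝ, (∀ f, 0 ≤ Qstar f) ∧ (∑ f : F, Qstar f = 1) ∧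
      ∀ k, M.mulVec (μv Qstar) k ≤ c k)
    (Qhat : F → ℝ) (lamhat : Fin K → ℝ)
    (hQhat : (∀ f, 0 ≤ Qhat f) ∧ ∑ f : F, Qhat f = 1)
    (hlamhat : (∀ k, 0 ≤ lamhat k) ∧ ∑ k : Fin K, |lamhat k| ≤ B)
    (hsaddle1 : ∀ Q : F → ℝ, (∀ f, 0 ≤ Q f) → (∑ f : F, Q f = 1) →
      L Qhat lamhat ≤ L Q lamhat + ε)
    (hsaddle2 : ∀ lam : Fin K → ℝ, (∀ k, 0 ≤ lam k) →
      (∑ k : Fin K, |lam k| ≤ B) → L Qhat lam - ε ≤ L Qhat lamhat) :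
    ∀ k : Fin K, M.mulVec (μv Qhat) k - c k ≤ (1 + 2 * ε) / B := by
  intro k
  obtain ⟨Qs, hQs0, hQs1, hQsle⟩ := hfeas
  obtain ⟨hQh0, hQh1⟩ := hQhat
  obtain ⟨hl0, hl1⟩ := hlamhat
  set g : Fin K → ℝ := M.mulVec (μv Qhat) - c with hg
  -- test multiplier B * e_k
  set lam : Fin K → ℝ := fun j => if j = k then B else 0 with hlam
  have hlamnn : ∀ j, 0 ≤ lam j := by
    intro j; simp only [hlam]; split <;> [exact hB.le; rfl]
  have hlamsum : ∑ j : Fin K, |lam j| ≤ B := by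
    have : ∑ j : Fin K, |lam j| = B := by
      rw [Finset.sum_eq_single k]
      · simp [hlam, abs_of_pos hB]
      · intro j _ hj; simp [hlam, hj]
      · intro h; exact absurd (Finset.mem_univ k) h
    linarith
  have hdot : lam ⬝ᵥ g = B * g k := by
    simp only [dotProduct, hlam]
    rw [Finset.sum_eq_single k]
    · simp
    · intro j _ hj; simp [hj]
    · intro h; exact absurd (Finset.mem_univ k) h
  have h2 := hsaddle2 lam hlamnn hlamsum
  have h1 := hsaddle1 Qs hQs0 hQs1
  have hEh := hEPR01 Qhat hQh0 hQh1
  have hEs := hEPR01 Qs hQs0 hQs1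
  have hdotstar : lamhat ⬝ᵥ (M.mulVec (μv Qs) - c) ≤ 0 := by
    apply Finset.sum_nonpos
    intro j _
    exact mul_nonpos_of_nonneg_of_nonpos (hl0 j) (by simpa using sub_nonpos.2 (hQsle j))
  rw [hL, hL] at h2
  rw [hL, hL] at h1
  rw [hdot] at h2
  have hBg : B * g k ≤ 1 + 2 * ε := by
    obtain ⟨he0, he1⟩ := hEh
    obtain ⟨hs0, hs1⟩ := hEs
    nlinarith [h1, h2, hdotstar]
  have : g k ≤ (1 + 2 * ε) / B := by
    rw [le_div_iff₀ hB]; linarith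
  simpa [hg] using this
end
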